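/- Let 0 < α < 1, M ∈ ℕ, and n > 2^M. There exists a constant c_α depending only on α such that for all integers 0 ≤ k ≤ M−1 and every x ∈ I_M(e_k), ∫_{I_M} |K_n^α(x+t)| dμ(t) ≤ c_α 2^k / 2^M. -/

import Mathlib

/-!
If `x_k = 1` then `r_k(x) = -1`, so `D_{2^{k+1}}(x) = (1 + r_k(x)) D_{2^k}(x) = 0`. Walsh functions
factor over dyadic blocks, `w_{2^K i + s} = w_{2^K i} w_s` for `s < 2^K`, hence
`D_{2^{k+1} q + r}(x) = w_{2^{k+1} q}(x) D_r(x)` and `|D_n(x)| ≤ 2^{k+1}` for every `n`.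
For `α > 0` the kernel `K_n^α` averages the `D_m` with positive weights `A_{n-m}^{α-1}` of total
mass `A_{n-1}^α ≤ A_n^α`, so `|K_n^α(x)| ≤ 2^{k+1}` as well. Finally `(x + t)_k = 1` for
`x ∈ I_M(e_k)`, `t ∈ I_M`, and `μ(I_M) = 2^{-M}`, which gives the bound with `c = 2`.
-/

open MeasureTheory Filter Finset
open scoped ENNReal NNReal

noncomputable section

/-- The dyadic group `G = ∏ Z₂`. -/
abbrev G : Type := ℕ → ZMod 2

instance : TopologicalSpace (ZMod 2) := ⊥
instance : DiscreteTopology (ZMod 2) := ⟨rfl⟩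
instance : MeasurableSpace (ZMod 2) := ⊤
instance : BorelSpace (ZMod 2) := ⟨borel_eq_top_of_discrete.symm⟩
instance : ContinuousAdd (ZMod 2) := ⟨continuous_of_discreteTopology⟩
instance : ContinuousNeg (ZMod 2) := ⟨continuous_of_discreteTopology⟩
instance : IsTopologicalAddGroup (ZMod 2) := ⟨⟩

/-- The normalized Haar measure `μ` on the dyadic group `G`. -/
def μG : Measure G := Measure.addHaarMeasure ⊤

/-- The Rademacher functions `r_k(x) = (-1)^{x_k}`. -/
def rad (k : ℕ) (x : G) : ℝ := (-1 : ℝ) ^ (x k).val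

/-- The Walsh functions `w_n = ∏_k r_k^{n_k}`, where `n = ∑ n_k 2^k`. -/
def walsh (n : ℕ) (x : G) : ℝ := ∏ k ∈ Finset.range n, rad k x ^ (Nat.testBit n k).toNat

/-- The Dirichlet kernels `D_n = ∑_{k=0}^{n-1} w_k`. -/
def dirichlet (n : ℕ) (x : G) : ℝ := ∑ k ∈ Finset.range n, walsh k x

/-- The Fejér kernels `K_n = (1/n) ∑_{k=1}^{n} D_k`. -/
def fejer (n : ℕ) (x : G) : ℝ := (n : ℝ)⁻¹ * ∑ k ∈ Finset.Icc 1 n, dirichlet k x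

/-- The Cesàro numbers `A_n^α = ((α+1)⋯(α+n))/n!`. -/
def cesA (α : ℝ) (n : ℕ) : ℝ := (∏ i ∈ Finset.range n, (α + i + 1)) / n.factorial

/-- The `(C,α)` kernels `K_n^α = (1/A_n^α) ∑_{k=1}^n A_{n-k}^{α-1} D_k`. -/
def cesKernel (α : ℝ) (n : ℕ) (x : G) : ℝ :=
  (cesA α n)⁻¹ * ∑ k ∈ Finset.Icc 1 n, cesA (α - 1) (n - k) * dirichlet k x

/-- Walsh–Fourier coefficients of an integrable function. -/
def walshCoeff (f : G → ℝ) (k : ℕ) : ℝ := ∫ x, f x * walsh k x ∂μG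

/-- Partial sums `S_m f` of the Walsh–Fourier series. -/
def partialSum (f : G → ℝ) (m : ℕ) (x : G) : ℝ :=
  ∑ k ∈ Finset.range m, walshCoeff f k * walsh k x

/-- The `(C,α)` means `σ_n^α f = (1/A_n^α) ∑_{k=1}^n A_{n-k}^{α-1} S_k f`. -/
def cesaroMean (α : ℝ) (f : G → ℝ) (n : ℕ) (x : G) : ℝ :=
  (cesA α n)⁻¹ * ∑ k ∈ Finset.Icc 1 n, cesA (α - 1) (n - k) * partialSum f k x

/-- The dyadic interval `I_n(x)`. -/
def dyadicI (n : ℕ) (x : G) : Set G := {y | ∀ i < n, y i = x i}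

/-- `e_k ∈ G`: the element whose `k`-th coordinate is `1` and all others `0`. -/
def eG (k : ℕ) : G := fun i => if i = k then 1 else 0

/-- The projection onto the first `n` coordinates. -/
def projG (n : ℕ) : G → (Fin n → ZMod 2) := fun x i => x i

/-- The dyadic filtration `ℱ_n`, generated by the dyadic intervals of length `n`. -/
def dyadicF : Filtration ℕ (inferInstance : MeasurableSpace G) where
  seq n := MeasurableSpace.comap (projG n) inferInstance
  mono' := by
    intro n m hnm
    have h : projG n = (fun (y : Fin m → ZMod 2) (i : Fin n) => y (Fin.castLE hnm i)) ∘ projG m :=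
      rfl
    simp only []
    rw [h, ← MeasurableSpace.comap_comp]
    exact MeasurableSpace.comap_mono
      ((measurable_pi_lambda _ fun i => measurable_pi_apply _).comap_le)
  le' := fun n => (measurable_pi_lambda _ fun i => measurable_pi_apply _).comap_le

/-- The Walsh–Fourier coefficients `F̂(k) = lim_n ∫ F_n w_k dμ` of a martingale. -/
def martCoeff (F : ℕ → G → ℝ) (k : ℕ) : ℝ :=
  limUnder atTop (fun n => ∫ x, F n x * walsh k x ∂μG)

/-- Partial sums `S_m F` of the Walsh–Fourier series of a martingale. -/
def martSum (F : ℕ → G → ℝ) (m : ℕ) (x : G) : ℝ :=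
  ∑ k ∈ Finset.range m, martCoeff F k * walsh k x

/-- The `(C,α)` means of a martingale. -/
def martCesaro (α : ℝ) (F : ℕ → G → ℝ) (n : ℕ) (x : G) : ℝ :=
  (cesA α n)⁻¹ * ∑ k ∈ Finset.Icc 1 n, cesA (α - 1) (n - k) * martSum F k x

/-- The `L_p(G)` quasi-norm `(∫ |f|^p dμ)^{1/p}`, valued in `ℝ≥0∞`. -/
def LpNormG (p : ℝ) (f : G → ℝ) : ℝ≥0∞ :=
  (∫⁻ x, ENNReal.ofReal |f x| ^ p ∂μG) ^ (1 / p)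

/-- The Hardy space quasi-norm `‖F‖_{H_p} = ‖sup_n |F_n|‖_p` of a martingale. -/
def hardyNorm (p : ℝ) (F : ℕ → G → ℝ) : ℝ≥0∞ :=
  (∫⁻ x, (⨆ n, ENNReal.ofReal |F n x|) ^ p ∂μG) ^ (1 / p)

/-- The Hardy quasi-norm of an integrable function, via its generated martingale `(E_n f)`. -/
def hardyFnNorm (p : ℝ) (f : G → ℝ) : ℝ≥0∞ :=
  hardyNorm p (fun n => μG[f | dyadicF n])

lemma abs_rad (k : ℕ) (x : G) : |rad k x| = 1 := by
  simp [rad]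

lemma rad_of_apply_eq_one {k : ℕ} {x : G} (hx : x k = 1) : rad k x = -1 := by
  simp [rad, hx, ZMod.val_one]

lemma abs_walsh_le_one (n : ℕ) (x : G) : |walsh n x| ≤ 1 := by
  rw [walsh, Finset.abs_prod]
  exact Finset.prod_le_one (fun _ _ => abs_nonneg _) fun j _ => by rw [abs_pow, abs_rad, one_pow]

lemma walsh_two_pow (K : ℕ) (x : G) : walsh (2 ^ K) x = rad K x := by
  rw [walsh, Finset.prod_eq_single_of_mem K (Finset.mem_range.mpr K.lt_two_pow_self)]
  · simp [Nat.testBit_two_pow_self]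
  · intro j _ hj
    simp [Nat.testBit_two_pow_of_ne (Ne.symm hj)]

lemma walsh_eq_prod_range {n N : ℕ} (hn : n ≤ N) (x : G) :
    walsh n x = ∏ j ∈ Finset.range N, rad j x ^ (Nat.testBit n j).toNat := by
  rw [walsh, ← Finset.prod_range_mul_prod_Ico _ hn, Finset.prod_eq_one (s := Finset.Ico n N),
    mul_one]
  intro j hj
  rw [Nat.testBit_lt_two_pow (n.lt_two_pow_self.trans_le
    (Nat.pow_le_pow_right two_pos (Finset.mem_Ico.mp hj).1))]
  simp

lemma walsh_two_pow_mul_add (K i : ℕ) {s : ℕ} (hs : s < 2 ^ K) (x : G) :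
    walsh (2 ^ K * i + s) x = walsh (2 ^ K * i) x * walsh s x := by
  have hN : ∀ m ≤ 2 ^ K * i + s, walsh m x =
      ∏ j ∈ Finset.range (2 ^ K * i + s), rad j x ^ (Nat.testBit m j).toNat :=
    fun m hm => walsh_eq_prod_range hm x
  rw [hN _ le_rfl, hN _ (by omega), hN _ (by omega), ← Finset.prod_mul_distrib]
  refine Finset.prod_congr rfl fun j _ => ?_
  rw [Nat.testBit_two_pow_mul_add i hs, Nat.testBit_two_pow_mul]
  by_cases hj : j < K
  · simp [hj, not_le.mpr hj]
  · have hK : 2 ^ K ≤ 2 ^ j := Nat.pow_le_pow_right two_pos (not_lt.mp hj)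
    simp [hj, not_lt.mp hj, Nat.testBit_lt_two_pow (hs.trans_le hK)]

lemma abs_dirichlet_le (n : ℕ) (x : G) : |dirichlet n x| ≤ n := by
  calc |dirichlet n x| ≤ ∑ m ∈ Finset.range n, |walsh m x| := Finset.abs_sum_le_sum_abs _ _
    _ ≤ ∑ m ∈ Finset.range n, (1 : ℝ) := Finset.sum_le_sum fun m _ => abs_walsh_le_one m x
    _ = n := by simp

lemma dirichlet_two_pow_mul_add (K i : ℕ) {s : ℕ} (hs : s ≤ 2 ^ K) (x : G) :
    dirichlet (2 ^ K * i + s) x =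
      dirichlet (2 ^ K * i) x + walsh (2 ^ K * i) x * dirichlet s x := by
  rw [dirichlet, Finset.sum_range_add, dirichlet, dirichlet, Finset.mul_sum]
  congr 1
  exact Finset.sum_congr rfl fun m hm =>
    walsh_two_pow_mul_add K i ((Finset.mem_range.mp hm).trans_le hs) x

lemma dirichlet_two_pow_succ (K : ℕ) (x : G) :
    dirichlet (2 ^ (K + 1)) x = (1 + rad K x) * dirichlet (2 ^ K) x := by
  have h := dirichlet_two_pow_mul_add K 1 (le_refl (2 ^ K)) x
  simp only [mul_one, walsh_two_pow] at h
  rw [pow_succ, mul_two, h]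
  ring

lemma dirichlet_two_pow_mul_eq_zero {K : ℕ} {x : G} (hK : dirichlet (2 ^ K) x = 0) (q : ℕ) :
    dirichlet (2 ^ K * q) x = 0 := by
  induction q with
  | zero => simp [dirichlet]
  | succ q ih => rw [mul_add_one, dirichlet_two_pow_mul_add K q le_rfl, ih, hK, mul_zero, add_zero]

lemma abs_dirichlet_le_of_apply_eq_one {k : ℕ} {x : G} (hx : x k = 1) (n : ℕ) :
    |dirichlet n x| ≤ 2 ^ (k + 1) := by
  have hK : dirichlet (2 ^ (k + 1)) x = 0 := by
    rw [dirichlet_two_pow_succ, rad_of_apply_eq_one hx, add_neg_cancel, zero_mul]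
  have hr : n % 2 ^ (k + 1) < 2 ^ (k + 1) := Nat.mod_lt _ (Nat.two_pow_pos _)
  rw [← Nat.div_add_mod n (2 ^ (k + 1)), dirichlet_two_pow_mul_add _ _ hr.le,
    dirichlet_two_pow_mul_eq_zero hK, zero_add, abs_mul]
  calc |walsh _ x| * |dirichlet (n % 2 ^ (k + 1)) x| ≤ 1 * ((n % 2 ^ (k + 1) : ℕ) : ℝ) :=
        mul_le_mul (abs_walsh_le_one _ x) (abs_dirichlet_le _ x) (abs_nonneg _) zero_le_one
    _ ≤ 2 ^ (k + 1) := by rw [one_mul]; exact_mod_cast hr.le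

lemma cesA_pos {α : ℝ} (hα : -1 < α) (n : ℕ) : 0 < cesA α n := by
  refine div_pos (Finset.prod_pos fun i _ => ?_) (mod_cast n.factorial_pos)
  linarith [(i.cast_nonneg : (0 : ℝ) ≤ i)]

lemma cesA_succ_eq_add (α : ℝ) (m : ℕ) :
    cesA α (m + 1) = cesA α m + cesA (α - 1) (m + 1) := by
  have hprod : ∏ i ∈ Finset.range (m + 1), (α - 1 + i + 1) =
      α * ∏ i ∈ Finset.range m, (α + i + 1) := by
    rw [Finset.prod_range_succ']
    push_cast
    ring_nf
  have hm : (m : ℝ) + 1 ≠ 0 := by positivity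
  rw [cesA, cesA, cesA, hprod, Finset.prod_range_succ, Nat.factorial_succ]
  push_cast
  field_simp
  ring

lemma sum_range_cesA_sub_one (α : ℝ) (m : ℕ) :
    ∑ i ∈ Finset.range (m + 1), cesA (α - 1) i = cesA α m := by
  induction m with
  | zero => simp [cesA]
  | succ m ih => rw [Finset.sum_range_succ, ih, ← cesA_succ_eq_add]

lemma sum_Icc_cesA_sub_one_le {α : ℝ} (hα : 0 < α) (n : ℕ) :
    ∑ m ∈ Finset.Icc 1 n, cesA (α - 1) (n - m) ≤ cesA α n := by
  have hreflect : ∑ m ∈ Finset.Icc 1 n, cesA (α - 1) (n - m) =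
      ∑ j ∈ Finset.range n, cesA (α - 1) j :=
    Finset.sum_nbij' (fun m => n - m) (fun j => n - j)
      (by intro m hm; simp at hm ⊢; omega) (by intro j hj; simp at hj ⊢; omega)
      (by intro m hm; simp at hm; omega) (by intro j hj; simp at hj; omega) fun _ _ => rfl
  rw [hreflect, ← sum_range_cesA_sub_one]
  exact Finset.sum_le_sum_of_subset_of_nonneg (Finset.range_mono n.le_succ)
    fun i _ _ => (cesA_pos (by linarith) i).le

lemma abs_cesKernel_le {α : ℝ} (hα : 0 < α) {B : ℝ} {x : G}
    (hB : ∀ m, |dirichlet m x| ≤ B) (n : ℕ) : |cesKernel α n x| ≤ B := by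
  have hA : 0 < cesA α n := cesA_pos (by linarith) n
  have hw : ∀ m, 0 ≤ cesA (α - 1) m := fun m => (cesA_pos (by linarith) m).le
  have hB0 : 0 ≤ B := (abs_nonneg _).trans (hB 0)
  rw [cesKernel, abs_mul, abs_inv, abs_of_pos hA, inv_mul_le_iff₀ hA]
  calc |∑ m ∈ Finset.Icc 1 n, cesA (α - 1) (n - m) * dirichlet m x|
      ≤ ∑ m ∈ Finset.Icc 1 n, cesA (α - 1) (n - m) * B := by
        refine (Finset.abs_sum_le_sum_abs _ _).trans (Finset.sum_le_sum fun m _ => ?_)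
        rw [abs_mul, abs_of_nonneg (hw _)]
        exact mul_le_mul_of_nonneg_left (hB m) (hw _)
    _ ≤ cesA α n * B := by
        rw [← Finset.sum_mul]
        exact mul_le_mul_of_nonneg_right (sum_Icc_cesA_sub_one_le hα n) hB0

instance : μG.IsAddHaarMeasure := Measure.isAddHaarMeasure_addHaarMeasure ⊤

instance : IsProbabilityMeasure μG :=
  ⟨by
    rw [μG]
    simpa using Measure.addHaarMeasure_self (K₀ := (⊤ : TopologicalSpace.PositiveCompacts G))⟩

lemma measurableSet_dyadicI (M : ℕ) (x : G) : MeasurableSet (dyadicI M x) := by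
  have h : dyadicI M x = ⋂ i ∈ Finset.range M, {y : G | y i = x i} := by
    ext y
    simp [dyadicI]
  rw [h]
  exact Finset.measurableSet_biInter _ fun i _ =>
    measurableSet_eq_fun (measurable_pi_apply i) measurable_const

lemma measure_dyadicI_eq_measure_dyadicI_zero (M : ℕ) (x : G) :
    μG (dyadicI M x) = μG (dyadicI M 0) := by
  have h : dyadicI M x = (x + ·) ⁻¹' dyadicI M 0 := by
    ext y
    simp [dyadicI, CharTwo.add_eq_zero, eq_comm]
  rw [h, measure_preimage_add]

lemma dyadicI_succ_union (M : ℕ) :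
    dyadicI (M + 1) 0 ∪ dyadicI (M + 1) (eG M) = dyadicI M 0 := by
  ext y
  simp only [dyadicI, eG, Set.mem_union, Set.mem_ofPred_eq, Pi.zero_apply, Nat.lt_succ_iff]
  constructor
  · rintro (h | h) i hi
    · exact h i hi.le
    · simpa [hi.ne] using h i hi.le
  · intro h
    have hM : ∀ a : ZMod 2, a = 0 ∨ a = 1 := by decide
    refine (hM (y M)).imp (fun hy i hi => ?_) fun hy i hi => ?_
    all_goals rcases hi.lt_or_eq with hi | rfl
    · exact h i hi
    · exact hy
    · simpa [hi.ne] using h i hi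
    · simpa using hy

lemma disjoint_dyadicI_succ (M : ℕ) : Disjoint (dyadicI (M + 1) 0) (dyadicI (M + 1) (eG M)) := by
  refine Set.disjoint_left.mpr fun y h0 h1 => ?_
  have := (h0 M M.lt_succ_self).symm.trans (h1 M M.lt_succ_self)
  simp [eG] at this

lemma measure_dyadicI_zero (M : ℕ) : μG (dyadicI M 0) = 2⁻¹ ^ M := by
  induction M with
  | zero => simp [dyadicI]
  | succ M ih =>
    have h := measure_union (μ := μG) (disjoint_dyadicI_succ M)
      (measurableSet_dyadicI (M + 1) (eG M))
    rw [dyadicI_succ_union, measure_dyadicI_eq_measure_dyadicI_zero (M + 1) (eG M), ih,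
      ← two_mul] at h
    rw [pow_succ, h, mul_comm, ← mul_assoc,
      ENNReal.inv_mul_cancel two_ne_zero ENNReal.ofNat_ne_top, one_mul]

lemma measureReal_dyadicI (M : ℕ) (x : G) : μG.real (dyadicI M x) = (2 ^ M)⁻¹ := by
  simp [measureReal_def, measure_dyadicI_eq_measure_dyadicI_zero, measure_dyadicI_zero]

theorem statement5_general (α : ℝ) (hα0 : 0 < α) :
    ∃ c : ℝ, 0 < c ∧ ∀ M : ℕ, ∀ n : ℕ, 2 ^ M < n → ∀ k : ℕ, k < M →
      ∀ x ∈ dyadicI M (eG k),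
        (∫ t in dyadicI M 0, |cesKernel α n (x + t)| ∂μG) ≤ c * 2 ^ k / 2 ^ M := by
  refine ⟨2, two_pos, fun M n _ k hk x hx => ?_⟩
  have hbound : ∀ t ∈ dyadicI M 0, ‖|cesKernel α n (x + t)|‖ ≤ 2 ^ (k + 1) := by
    intro t ht
    have hxt : (x + t) k = 1 := by simp [hx k hk, ht k hk, eG]
    rw [Real.norm_eq_abs, abs_abs]
    exact abs_cesKernel_le hα0 (abs_dirichlet_le_of_apply_eq_one hxt) n
  calc ∫ t in dyadicI M 0, |cesKernel α n (x + t)| ∂μG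
      ≤ ‖∫ t in dyadicI M 0, |cesKernel α n (x + t)| ∂μG‖ := Real.le_norm_self _
    _ ≤ 2 ^ (k + 1) * μG.real (dyadicI M 0) :=
        norm_setIntegral_le_of_norm_le_const (measure_lt_top _ _) hbound
    _ = 2 * 2 ^ k / 2 ^ M := by rw [measureReal_dyadicI, pow_succ]; ring

/-- `∫_{I_M} |K_n^α(x+t)| dμ(t) ≤ c_α 2^k / 2^M` for
`x ∈ I_M(e_k)`, `0 ≤ k ≤ M-1`, `n > 2^M`. -/
theorem statement5 (α : ℝ) (hα0 : 0 < α) (hα1 : α < 1) :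
    ∃ c : ℝ, 0 < c ∧ ∀ M : ℕ, ∀ n : ℕ, 2 ^ M < n → ∀ k : ℕ, k < M →
      ∀ x ∈ dyadicI M (eG k),
        (∫ t in dyadicI M 0, |cesKernel α n (x + t)| ∂μG) ≤ c * 2 ^ k / 2 ^ M :=
  statement5_general α hα0

end
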